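/- arXiv:2508.12051 — 2 statements merged into one kernel-verified Lean document; each statement's English description precedes it below -/
import Mathlib

section
/- Let π : X → Y be a continuous surjection between compact metric spaces, K a nonempty closed subset of X, and α a finite open cover of X. Then D(α|_K | π) = min over finite open covers β of K such that {(π|_K)⁻¹(y)}_{y ∈ π(K)} ∨ β refines α|_K of ord(β|_K), where D(α|_K | π) is defined as the minimum of ord(β|_K) over finite open covers β of X with {π⁻¹(y)}_{y∈Y} ∨ β refining α. -/
open Set Filter Topology
open scoped Classical BigOperators

/-- A finite open cover of a topological space. -/
def IsFinOpenCover {X : Type*} [TopologicalSpace X] (α : Finset (Set X)) : Prop :=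
  (∀ U ∈ α, IsOpen U) ∧ ∀ x : X, ∃ U ∈ α, x ∈ U

/-- `β` refines `α`: every member of `β` is contained in a member of `α`. -/
def Refines {X : Type*} (β α : Finset (Set X)) : Prop :=
  ∀ V ∈ β, ∃ U ∈ α, V ⊆ U

/-- The order of the cover `β` restricted to a subset `K`:
the maximal number of members of `β` containing a common point of `K`, minus one. -/
noncomputable def ordOn {X : Type*} (β : Finset (Set X)) (K : Set X) : ℤ :=
  sSup ((fun x => ((β.filter (fun U => x ∈ U)).card : ℤ)) '' K) - 1

/-- The join `{π⁻¹(y)}_{y ∈ Y} ∨ β` refines `α`. -/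
def FiberJoinRefines {X Y : Type*} (π : X → Y) (β α : Finset (Set X)) : Prop :=
  ∀ V ∈ β, ∀ y : Y, ∃ U ∈ α, π ⁻¹' {y} ∩ V ⊆ U

/-- `D(α|_K | π)`: minimum of `ordOn β K` over finite open covers `β` of `X` with
`{π⁻¹(y)} ∨ β` refining `α`. -/
noncomputable def DcondOn {X Y : Type*} [TopologicalSpace X] (π : X → Y)
    (α : Finset (Set X)) (K : Set X) : ℤ :=
  sInf { n : ℤ | ∃ β : Finset (Set X), IsFinOpenCover β ∧ FiberJoinRefines π β α ∧
    ordOn β K = n }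

/-- `D(α|π)`. -/
noncomputable def Dcond {X Y : Type*} [TopologicalSpace X] (π : X → Y)
    (α : Finset (Set X)) : ℤ :=
  DcondOn π α Set.univ

/-- `D(α)`: minimum of `ord β` over finite open covers `β` refining `α`. -/
noncomputable def Dabs {X : Type*} [TopologicalSpace X] (α : Finset (Set X)) : ℤ :=
  sInf { n : ℤ | ∃ β : Finset (Set X), IsFinOpenCover β ∧ Refines β α ∧
    ordOn β Set.univ = n }

/-- Covering dimension of a space: supremum of `D(α)` over finite open covers. -/
noncomputable def covDim (P : Type*) [TopologicalSpace P] : ℤ :=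
  sSup { n : ℤ | ∃ α : Finset (Set P), IsFinOpenCover α ∧ Dabs α = n }

/-- The join `α ∨ β = {U ∩ V : U ∈ α, V ∈ β}`. -/
noncomputable def joinCover {X : Type*} (α β : Finset (Set X)) : Finset (Set X) :=
  (α ×ˢ β).image (fun p => p.1 ∩ p.2)

/-- The product cover `αᵈ` of `X^d`. -/
noncomputable def piCover {X : Type*} (α : Finset (Set X)) (d : ℕ) :
    Finset (Set (Fin d → X)) :=
  (Fintype.piFinset (fun _ : Fin d => α)).image (fun U => Set.univ.pi U)

/-- A sofic approximation sequence for a group `G`. -/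
structure SoficApprox (G : Type*) [Group G] where
  d : ℕ → ℕ
  σ : ∀ i, G → Equiv.Perm (Fin (d i))
  mul_cond : ∀ s t : G,
    Tendsto (fun i => (((Finset.univ : Finset (Fin (d i))).filter
      (fun v => σ i s (σ i t v) = σ i (s * t) v)).card : ℝ) / (d i)) atTop (nhds 1)
  free_cond : ∀ s t : G, s ≠ t →
    Tendsto (fun i => (((Finset.univ : Finset (Fin (d i))).filter
      (fun v => σ i s v = σ i t v)).card : ℝ) / (d i)) atTop (nhds 0)
  d_lim : Tendsto d atTop atTop

/-- `Map(ρ, F, δ, σ)`: the set of maps `ξ : [d] → X` with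
`ρ₂(ξ ∘ σ_s, s ∘ ξ) ≤ δ` for all `s ∈ F`. -/
noncomputable def MapApprox {G X : Type*} [Group G] [MulAction G X]
    (ρ : X → X → ℝ) (F : Finset G) (δ : ℝ) {d : ℕ}
    (σ : G → Equiv.Perm (Fin d)) : Set (Fin d → X) :=
  { ξ | ∀ s ∈ F, Real.sqrt (∑ a : Fin d, (ρ (ξ (σ s a)) (s • ξ a)) ^ 2) ≤ δ }

/-- `D(α|π, ρ, F, δ, σ) = D(αᵈ|_{Map(ρ,F,δ,σ)} | πᵈ)`. -/
noncomputable def DvalCond {G X Y : Type*} [Group G] [MetricSpace X] [MulAction G X]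
    (π : X → Y) (α : Finset (Set X)) (F : Finset G) (δ : ℝ) {d : ℕ}
    (σ : G → Equiv.Perm (Fin d)) : ℤ :=
  sInf { n : ℤ | ∃ β : Finset (Set (Fin d → X)), IsFinOpenCover β ∧
    FiberJoinRefines (fun ξ => π ∘ ξ) β (piCover α d) ∧
    ordOn β (MapApprox dist F δ σ) = n }

/-- Sofic conditional mean dimension of a finite open cover `α` relative to `π`. -/
noncomputable def mdimCond {G X Y : Type*} [Group G] [MetricSpace X] [MulAction G X]
    (sa : SoficApprox G) (π : X → Y) (α : Finset (Set X)) : ℝ :=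
  ⨅ F : Finset G, ⨅ δ : ℝ, ⨅ _ : 0 < δ,
    limsup (fun i => (DvalCond π α F δ (sa.σ i) : ℝ) / (sa.d i)) atTop

/-- Sofic conditional mean dimension `mdim_Σ(X|π)`. -/
noncomputable def mdimCondSys {G X Y : Type*} [Group G] [MetricSpace X] [MulAction G X]
    (sa : SoficApprox G) (π : X → Y) : ℝ :=
  sSup { r : ℝ | ∃ α : Finset (Set X), IsFinOpenCover α ∧ mdimCond sa π α = r }

/-- Absolute version: `D(αᵈ|_{Map(ρ,F,δ,σ)})`. -/
noncomputable def DvalAbs {G X : Type*} [Group G] [MetricSpace X] [MulAction G X]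
    (α : Finset (Set X)) (F : Finset G) (δ : ℝ) {d : ℕ}
    (σ : G → Equiv.Perm (Fin d)) : ℤ :=
  sInf { n : ℤ | ∃ β : Finset (Set (Fin d → X)), IsFinOpenCover β ∧
    Refines β (piCover α d) ∧ ordOn β (MapApprox dist F δ σ) = n }

/-- Absolute sofic mean dimension of a finite open cover. -/
noncomputable def mdimAbs {G X : Type*} [Group G] [MetricSpace X] [MulAction G X]
    (sa : SoficApprox G) (α : Finset (Set X)) : ℝ :=
  ⨅ F : Finset G, ⨅ δ : ℝ, ⨅ _ : 0 < δ,
    limsup (fun i => (DvalAbs (G := G) α F δ (sa.σ i) : ℝ) / (sa.d i)) atTop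

/-- Relative version: `D(π, α, ρ, F, δ, σ) = D(αᵈ|_{πᵈ(Map(ρ,F,δ,σ))})`. -/
noncomputable def DvalRel {G X Y : Type*} [Group G] [MetricSpace X] [MulAction G X]
    [TopologicalSpace Y] (π : X → Y) (α : Finset (Set Y)) (F : Finset G) (δ : ℝ)
    {d : ℕ} (σ : G → Equiv.Perm (Fin d)) : ℤ :=
  sInf { n : ℤ | ∃ β : Finset (Set (Fin d → Y)), IsFinOpenCover β ∧
    Refines β (piCover α d) ∧
    ordOn β ((fun ξ => π ∘ ξ) '' MapApprox dist F δ σ) = n }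

/-- Relative sofic mean dimension `mdim_Σ(π, α)` of a finite open cover `α` of `Y`. -/
noncomputable def mdimRel {G X Y : Type*} [Group G] [MetricSpace X] [MulAction G X]
    [TopologicalSpace Y] (sa : SoficApprox G) (π : X → Y) (α : Finset (Set Y)) : ℝ :=
  ⨅ F : Finset G, ⨅ δ : ℝ, ⨅ _ : 0 < δ,
    limsup (fun i => (DvalRel π α F δ (sa.σ i) : ℝ) / (sa.d i)) atTop

/-- `α` is admissible with respect to the tuple `x`: no member of `α`
has closure containing all the points of `x`. -/
def AdmissibleCover {X : Type*} [TopologicalSpace X] (α : Finset (Set X))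
    {n : ℕ} (x : Fin n → X) : Prop :=
  ∀ U ∈ α, ¬ (Set.range x ⊆ closure U)

/-- The set `D_n^md(X|π, G, Σ)` of sofic conditional mean dimension `n`-tuples. -/
def condMDTuples {G X Y : Type*} [Group G] [MetricSpace X] [MulAction G X]
    (sa : SoficApprox G) (π : X → Y) (n : ℕ) : Set (Fin n → X) :=
  { x | (∃ i j, x i ≠ x j) ∧
    ∀ α : Finset (Set X), IsFinOpenCover α → AdmissibleCover α x →
      0 < mdimCond sa π α }

/-- The set `D_n^md(Y|X, G, Σ)` of relative sofic mean dimension `n`-tuples. -/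
def relMDTuples {G X Y : Type*} [Group G] [MetricSpace X] [MulAction G X]
    [TopologicalSpace Y] (sa : SoficApprox G) (π : X → Y) (n : ℕ) :
    Set (Fin n → Y) :=
  { y | (∃ i j, y i ≠ y j) ∧
    ∀ α : Finset (Set Y), IsFinOpenCover α → AdmissibleCover α y →
      0 < mdimRel sa π α }

/-- The index `(j,l) ↦ j·n + l : Fin (n·d)`. -/
def idx {d n : ℕ} (j : Fin d) (l : Fin n) : Fin (n * d) :=
  ⟨j.1 * n + l.1, by
    rcases j with ⟨j, hj⟩; rcases l with ⟨l, hl⟩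
    have h1 : j * n + l < (j + 1) * n := by nlinarith
    have h2 : (j + 1) * n ≤ d * n := Nat.mul_le_mul_right _ hj
    calc j * n + l < (j + 1) * n := h1
      _ ≤ d * n := h2
      _ = n * d := Nat.mul_comm d n⟩
/-! Continuity of `π` and compactness let a cover of `K` whose fibrewise join refines `α|_K`
be thickened to open sets of `X` without losing the fibrewise refinement: for compact `F`,
the sets `O_U = {y | π⁻¹(y) ∩ F ⊆ U}` (`U ∈ α`) are open and cover `Y`, and shrinking them to
closed sets `C_U ⊆ O_U` gives the open thickening `⋂ U, (π⁻¹ C_U)ᶜ ∪ U` of `F`. The complement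
of `K` is covered by `{U \ K : U ∈ α}`, which does not change the order on `K`. Conversely,
restricting a cover of `X` to `K` does not increase the order on `K`. -/

/-- The join `{(π|_K)⁻¹(y)}_{y ∈ π(K)} ∨ β` refines `α|_K`, for a cover `β` of `K`. -/
def FiberJoinRefinesOn {X Y : Type*} (π : X → Y) (K : Set X) (β : Finset (Set K))
    (α : Finset (Set X)) : Prop :=
  ∀ V ∈ β, ∀ y ∈ π '' K, ∃ U ∈ α, ((fun x : K => π x) ⁻¹' {y}) ∩ V ⊆ Subtype.val ⁻¹' U

section

variable {X Y : Type*}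

theorem ordOn_le_ordOn {Z : Type*} {β : Finset (Set X)} {γ : Finset (Set Z)}
    {A : Set X} {B : Set Z}
    (h : ∀ x ∈ A, ∃ z ∈ B, (β.filter (x ∈ ·)).card ≤ (γ.filter (z ∈ ·)).card) :
    ordOn β A ≤ ordOn γ B := by
  refine sub_le_sub_right ?_ 1
  have hB : BddAbove ((fun z => ((γ.filter (z ∈ ·)).card : ℤ)) '' B) := by
    refine ⟨γ.card, ?_⟩
    rintro _ ⟨z, -, rfl⟩
    exact Nat.cast_le.2 (Finset.card_filter_le _ _)
  rcases A.eq_empty_or_nonempty with rfl | hA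
  · rw [image_empty, Int.csSup_empty]
    rcases B.eq_empty_or_nonempty with rfl | ⟨z, hz⟩
    · simp
    · exact le_csSup_of_le hB ⟨z, hz, rfl⟩ (Int.natCast_nonneg _)
  · refine csSup_le (hA.image _) ?_
    rintro _ ⟨x, hx, rfl⟩
    obtain ⟨z, hz, hle⟩ := h x hx
    exact le_csSup_of_le hB ⟨z, hz, rfl⟩ (Nat.cast_le.2 hle)

theorem ordOn_image_preimage_le {Z : Type*} (β : Finset (Set X)) (f : Z → X) (A : Set Z) :
    ordOn (β.image (f ⁻¹' ·)) A ≤ ordOn β (f '' A) := by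
  refine ordOn_le_ordOn fun z hz => ⟨f z, mem_image_of_mem f hz, ?_⟩
  rw [Finset.filter_image]
  exact Finset.card_image_le

theorem IsFinOpenCover.image_preimage [TopologicalSpace X] [TopologicalSpace Y]
    {β : Finset (Set X)} (hβ : IsFinOpenCover β) {f : Y → X} (hf : Continuous f) :
    IsFinOpenCover (β.image (f ⁻¹' ·)) := by
  refine ⟨?_, fun y => ?_⟩
  · simp only [Finset.mem_image]
    rintro _ ⟨U, hU, rfl⟩
    exact (hβ.1 U hU).preimage hf
  · obtain ⟨U, hU, hyU⟩ := hβ.2 (f y)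
    exact ⟨_, Finset.mem_image_of_mem _ hU, hyU⟩

theorem FiberJoinRefines.restrict {π : X → Y} {β α : Finset (Set X)}
    (h : FiberJoinRefines π β α) (K : Set X) :
    FiberJoinRefinesOn π K (β.image (Subtype.val ⁻¹' ·)) α := by
  simp only [FiberJoinRefinesOn, Finset.mem_image]
  rintro _ ⟨V, hV, rfl⟩ y -
  obtain ⟨U, hU, hsub⟩ := h V hV y
  exact ⟨U, hU, fun x hx => hsub hx⟩

theorem exists_isOpen_superset_fiberJoinRefines [TopologicalSpace X] [TopologicalSpace Y]
    [CompactSpace Y] [T2Space Y] {π : X → Y} (hπ : Continuous π) {α : Finset (Set X)}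
    (hα : ∀ U ∈ α, IsOpen U) {F : Set X} (hF : IsCompact F)
    (h : ∀ y, ∃ U ∈ α, π ⁻¹' {y} ∩ F ⊆ U) :
    ∃ W, IsOpen W ∧ F ⊆ W ∧ ∀ y, ∃ U ∈ α, π ⁻¹' {y} ∩ W ⊆ U := by
  set O : α → Set Y := fun U => (π '' (F \ U))ᶜ
  have hOo : ∀ U, IsOpen (O U) := fun U =>
    ((hF.diff (hα U U.2)).image hπ).isClosed.isOpen_compl
  have hOcov : univ ⊆ ⋃ U, O U := by
    intro y _
    obtain ⟨U, hU, hsub⟩ := h y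
    refine mem_iUnion.2 ⟨⟨U, hU⟩, ?_⟩
    rintro ⟨x, ⟨hxF, hxU⟩, hxy⟩
    exact hxU (hsub ⟨hxy, hxF⟩)
  obtain ⟨C, hCcov, hCcl, hCO⟩ :=
    exists_subset_iUnion_closed_subset isClosed_univ hOo (fun _ _ => toFinite _) hOcov
  refine ⟨⋂ U : α, (π ⁻¹' C U)ᶜ ∪ U,
    isOpen_iInter_of_finite fun U => ((hCcl U).preimage hπ).isOpen_compl.union (hα U U.2),
    fun x hx => mem_iInter.2 fun U => ?_, fun y => ?_⟩
  · refine or_iff_not_imp_left.2 fun hxC => ?_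
    by_contra hxU
    exact hCO U (not_not.1 hxC) ⟨x, ⟨hx, hxU⟩, rfl⟩
  · obtain ⟨U, hyU⟩ := mem_iUnion.1 (hCcov (mem_univ y))
    refine ⟨U, U.2, ?_⟩
    rintro x ⟨rfl, hxW⟩
    exact (mem_iInter.1 hxW U).resolve_left (not_not.2 hyU)

variable [TopologicalSpace X] [CompactSpace X] [T2Space X] [Nonempty X]
  [TopologicalSpace Y] [CompactSpace Y] [T2Space Y] {π : X → Y} {K : Set X}
  {α : Finset (Set X)} {β : Finset (Set K)}

theorem FiberJoinRefinesOn.exists_isOpen_extend (hπ : Continuous π) (hK : IsClosed K)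
    (hα : IsFinOpenCover α) (hβ : IsFinOpenCover β) (hβα : FiberJoinRefinesOn π K β α) :
    ∃ W : β → Set X, (∀ V, IsOpen (W V)) ∧ (∀ V, Subtype.val ⁻¹' W V ⊆ (V : Set K)) ∧
      (∀ V y, ∃ U ∈ α, π ⁻¹' {y} ∩ W V ⊆ U) ∧ K ⊆ ⋃ V, W V := by
  choose T hTo hTV using fun V : β => isOpen_induced_iff.1 (hβ.1 V V.2)
  have hKT : K ⊆ ⋃ V, T V := by
    intro x hx
    obtain ⟨V, hV, hxV⟩ := hβ.2 ⟨x, hx⟩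
    exact mem_iUnion.2 ⟨⟨V, hV⟩, (hTV ⟨V, hV⟩).ge hxV⟩
  obtain ⟨G, hGcov, hGcl, hGT⟩ :=
    exists_subset_iUnion_closed_subset hK hTo (fun _ _ => toFinite _) hKT
  have hGα : ∀ V : β, ∀ y, ∃ U ∈ α, π ⁻¹' {y} ∩ (G V ∩ K) ⊆ U := by
    intro V y
    by_cases hy : y ∈ π '' K
    · obtain ⟨U, hU, hsub⟩ := hβα V V.2 y hy
      refine ⟨U, hU, fun x ⟨hxy, hxG, hxK⟩ => @hsub ⟨x, hxK⟩ ⟨hxy, (hTV V).le (hGT V hxG)⟩⟩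
    · obtain ⟨U, hU, -⟩ := hα.2 (Classical.arbitrary X)
      exact ⟨U, hU, fun x ⟨hxy, _, hxK⟩ => (hy ⟨x, hxK, hxy⟩).elim⟩
  choose W hWo hGW hWα using fun V =>
    exists_isOpen_superset_fiberJoinRefines hπ hα.1 ((hGcl V).inter hK).isCompact (hGα V)
  refine ⟨fun V => W V ∩ T V, fun V => (hWo V).inter (hTo V), fun V => ?_, fun V y => ?_,
    fun x hx => ?_⟩
  · rw [← hTV V]
    exact preimage_mono inter_subset_right
  · obtain ⟨U, hU, hsub⟩ := hWα V y
    exact ⟨U, hU, fun x hx => hsub ⟨hx.1, hx.2.1⟩⟩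
  · obtain ⟨V, hxV⟩ := mem_iUnion.1 (hGcov hx)
    exact mem_iUnion.2 ⟨V, hGW V ⟨hxV, hx⟩, hGT V hxV⟩

theorem FiberJoinRefinesOn.exists_extend (hπ : Continuous π) (hK : IsClosed K)
    (hα : IsFinOpenCover α) (hβ : IsFinOpenCover β) (hβα : FiberJoinRefinesOn π K β α) :
    ∃ γ : Finset (Set X), IsFinOpenCover γ ∧ FiberJoinRefines π γ α ∧
      ordOn γ K ≤ ordOn β univ := by
  obtain ⟨W, hWo, hWβ, hWα, hKW⟩ := hβα.exists_isOpen_extend hπ hK hα hβ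
  have hdisj : ∀ S ∈ α.image (· \ K), ∀ x ∈ K, x ∉ S := by
    simp only [Finset.mem_image]
    rintro _ ⟨U, -, rfl⟩ x hx hxS
    exact hxS.2 hx
  refine ⟨Finset.univ.image W ∪ α.image (· \ K), ⟨?_, fun x => ?_⟩, ?_, ?_⟩
  · simp only [Finset.mem_union, Finset.mem_image]
    rintro _ (⟨V, -, rfl⟩ | ⟨U, hU, rfl⟩)
    exacts [hWo V, (hα.1 U hU).sdiff hK]
  · by_cases hx : x ∈ K
    · obtain ⟨V, hxV⟩ := mem_iUnion.1 (hKW hx)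
      exact ⟨W V, Finset.mem_union_left _ (Finset.mem_image_of_mem W (Finset.mem_univ V)), hxV⟩
    · obtain ⟨U, hU, hxU⟩ := hα.2 x
      exact ⟨U \ K, Finset.mem_union_right _ (Finset.mem_image_of_mem _ hU), hxU, hx⟩
  · simp only [FiberJoinRefines, Finset.mem_union, Finset.mem_image]
    rintro _ (⟨V, -, rfl⟩ | ⟨U, hU, rfl⟩) y
    exacts [hWα V y, ⟨U, hU, fun x hx => hx.2.1⟩]
  · refine ordOn_le_ordOn fun x hx => ⟨⟨x, hx⟩, mem_univ _, ?_⟩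
    calc ((Finset.univ.image W ∪ α.image (· \ K)).filter (x ∈ ·)).card
        = ((Finset.univ.image W).filter (x ∈ ·)).card := by
          rw [Finset.filter_union, Finset.filter_false_of_mem fun S hS => hdisj S hS x hx,
            Finset.union_empty]
      _ ≤ (Finset.univ.filter (x ∈ W ·)).card := by
          rw [Finset.filter_image]
          exact Finset.card_image_le
      _ ≤ (β.filter (⟨x, hx⟩ ∈ ·)).card := by
          refine Finset.card_le_card_of_injOn Subtype.val (fun V hV => ?_)
            Subtype.val_injective.injOn
          simp only [Finset.coe_filter, Finset.mem_univ, true_and] at hV ⊢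
          exact ⟨V.2, hWβ V hV⟩

end

theorem stmt_6_general {X Y : Type*} [MetricSpace X] [CompactSpace X]
    [MetricSpace Y] [CompactSpace Y]
    (π : X → Y) (hπc : Continuous π)
    (K : Set X) (hKne : K.Nonempty) (hKcl : IsClosed K)
    (α : Finset (Set X)) (hα : IsFinOpenCover α) :
    DcondOn π α K =
      sInf { n : ℤ | ∃ β : Finset (Set K), IsFinOpenCover β ∧
        (∀ V ∈ β, ∀ y ∈ π '' K, ∃ U ∈ α,
          ((fun x : K => π x) ⁻¹' {y}) ∩ V ⊆ (Subtype.val ⁻¹' U)) ∧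
        ordOn β Set.univ = n } := by
  have : Nonempty X := ⟨hKne.some⟩
  refine csInf_eq_csInf_of_forall_exists_le ?_ ?_
  · rintro _ ⟨β, hβ, hβα, rfl⟩
    refine ⟨_, ⟨_, hβ.image_preimage continuous_subtype_val, hβα.restrict K, rfl⟩, ?_⟩
    exact (ordOn_image_preimage_le β Subtype.val univ).trans_eq
      (congrArg _ (Subtype.coe_image_univ K))
  · rintro _ ⟨β, hβ, hβα, rfl⟩
    obtain ⟨γ, hγ, hγα, hle⟩ := FiberJoinRefinesOn.exists_extend hπc hKcl hα hβ hβα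
    exact ⟨_, ⟨γ, hγ, hγα, rfl⟩, hle⟩

/-- For a nonempty closed `K ⊆ X`,
`D(α|_K | π)` equals the minimum of `ord(β)` over finite open covers `β` of `K`
whose join with the fibers of `π|_K` refines `α|_K`. -/
theorem stmt_6 {X Y : Type*} [MetricSpace X] [CompactSpace X]
    [MetricSpace Y] [CompactSpace Y]
    (π : X → Y) (hπc : Continuous π) (hπs : Function.Surjective π)
    (K : Set X) (hKne : K.Nonempty) (hKcl : IsClosed K)
    (α : Finset (Set X)) (hα : IsFinOpenCover α) :
    DcondOn π α K =
      sInf { n : ℤ | ∃ β : Finset (Set K), IsFinOpenCover β ∧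
        (∀ V ∈ β, ∀ y ∈ π '' K, ∃ U ∈ α,
          ((fun x : K => π x) ⁻¹' {y}) ∩ V ⊆ (Subtype.val ⁻¹' U)) ∧
        ordOn β Set.univ = n } :=
  stmt_6_general π hπc K hKne hKcl α hα
end

section
/- Let π : (X,G) → (Y,G) be a factor map between G-systems of a sofic group G with sofic approximation sequence Σ. A subset K of X with at least two points is a sofic conditional mean dimension set (of X relevant to π) if and only if for every n ≥ 2 and any n distinct points x₁,…,x_n ∈ K, the tuple (x₁,…,x_n) is a sofic conditional mean dimension n-tuple. -/
open Set Filter Topology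
open scoped Classical BigOperators

/-- a subset `K` of `X` with at least two points is a sofic conditional
mean dimension set iff every tuple of distinct points of `K` is a sofic conditional
mean dimension tuple. -/
theorem stmt_18 {G X Y : Type*} [Group G] [Countable G]
    [MetricSpace X] [CompactSpace X] [MulAction G X]
    [MetricSpace Y] [CompactSpace Y] [MulAction G Y]
    (hX : ∀ g : G, Continuous fun x : X => g • x)
    (hY : ∀ g : G, Continuous fun y : Y => g • y)
    (sa : SoficApprox G)
    (π : X → Y) (hπc : Continuous π) (hπs : Function.Surjective π)
    (hπe : ∀ (g : G) (x : X), π (g • x) = g • π x)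
    (K : Set X) (hK : K.Nontrivial) :
    (∀ α : Finset (Set X), IsFinOpenCover α →
        (∀ U ∈ α, ¬ K ⊆ closure U) → 0 < mdimCond sa π α) ↔
      ∀ n : ℕ, 2 ≤ n → ∀ x : Fin n → X, (∀ i, x i ∈ K) →
        Function.Injective x → x ∈ condMDTuples sa π n := by
  obtain ⟨a, haK, b, hbK, hab⟩ := hK
  constructor
  · intro h n hn x hxK hxinj
    refine ⟨⟨⟨0, by omega⟩, ⟨1, by omega⟩, fun he => by
      have := hxinj he
      simp [Fin.ext_iff] at this⟩, ?_⟩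
    intro α hα hadm
    refine h α hα ?_
    intro U hU hKU
    refine hadm U hU ?_
    rintro _ ⟨i, rfl⟩
    exact hKU (hxK i)
  · intro h α hα hadm
    -- choose witnesses outside each closure
    have hch : ∀ U ∈ α, ∃ k, k ∈ K ∧ k ∉ closure U := by
      intro U hU
      have := hadm U hU
      rw [Set.not_subset] at this
      obtain ⟨k, hk, hk'⟩ := this
      exact ⟨k, hk, hk'⟩
    set f : Set X → X := fun U =>
      if hU : ∃ k, k ∈ K ∧ k ∉ closure U then hU.choose else a with hf
    have hfK : ∀ U ∈ α, f U ∈ K ∧ f U ∉ closure U := by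
      intro U hU
      have hex := hch U hU
      simp only [hf, dif_pos hex]
      exact hex.choose_spec
    set s : Finset X := insert a (insert b (α.image f)) with hs
    have hmemK : ∀ y ∈ s, y ∈ K := by
      intro y hy
      simp only [hs, Finset.mem_insert, Finset.mem_image] at hy
      rcases hy with rfl | rfl | ⟨U, hU, rfl⟩
      · exact haK
      · exact hbK
      · exact (hfK U hU).1
    have has : a ∈ s := by simp [hs]
    have hbs : b ∈ s := by simp [hs]
    have hcard : 2 ≤ s.card := by
      have : 1 < s.card := Finset.one_lt_card.mpr ⟨a, has, b, hbs, hab⟩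
      omega
    set x : Fin s.card → X := fun i => ((s.equivFin.symm i : s) : X) with hx
    have hxinj : Function.Injective x :=
      Subtype.val_injective.comp s.equivFin.symm.injective
    have hxK : ∀ i, x i ∈ K := fun i => hmemK _ (s.equivFin.symm i).2
    have hrange : ∀ y ∈ s, y ∈ Set.range x := by
      intro y hy
      exact ⟨s.equivFin ⟨y, hy⟩, by simp [hx]⟩
    have hadm' : AdmissibleCover α x := by
      intro U hU hsub
      have hfs : f U ∈ s := by
        simp only [hs, Finset.mem_insert, Finset.mem_image]
        exact Or.inr (Or.inr ⟨U, hU, rfl⟩)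
      exact (hfK U hU).2 (hsub (hrange _ hfs))
    exact (h s.card hcard x hxK hxinj).2 α hα hadm'
end
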